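/- Let q ∈ ℂ with 0 < |q| < 1, and let 𝔄 be the closure in operator norm of the unital star-subalgebra of bounded operators on H generated by A, B, D (so 𝔄 is the C*-algebra C(U_q(2)) in its defining representation). Then the Haar state h is faithful on 𝔄: for every x ∈ 𝔄, if h(x*x) = 0 then x = 0. -/

import Mathlib

open scoped ComplexConjugate ENNReal

noncomputable section

/-- The Hilbert space `H = ℓ²(ℕ × ℤ × ℤ)` over `ℂ`. -/
abbrev H : Type := lp (fun _ : ℕ × ℤ × ℤ => ℂ) 2

/-- The standard orthonormal basis vectors of `H`. -/
noncomputable def e (i : ℕ × ℤ × ℤ) : H := lp.single 2 i 1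

/-- The Haar state `h(x) = (1-|q|²) Σ_{n≥0} |q|^{2n} ⟨e_{n,0,0}, x e_{n,0,0}⟩`. -/
noncomputable def haar (q : ℂ) (x : H →L[ℂ] H) : ℂ :=
  (1 - (‖q‖ : ℂ) ^ 2) *
    ∑' n : ℕ, ((‖q‖ : ℂ) ^ (2 * n)) *
      inner (𝕜 := ℂ) (e (n, 0, 0)) (x (e (n, 0, 0)))

namespace UqAux

lemma two_toReal : (2 : ℝ≥0∞).toReal = 2 := by simp

lemma two_toReal_pos : 0 < (2 : ℝ≥0∞).toReal := by rw [two_toReal]; norm_num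

/-- reindexing equivalence -/
def σ (r₀ s₀ : ℤ) : (ℕ × ℤ × ℤ) ≃ (ℕ × ℤ × ℤ) where
  toFun j := (j.1, j.2.1 + r₀, j.2.2 + s₀)
  invFun j := (j.1, j.2.1 - r₀, j.2.2 - s₀)
  left_inv j := by simp
  right_inv j := by simp

variable (μ : ℂ) (r₀ s₀ : ℤ)

def Wfun (f : H) : (ℕ × ℤ × ℤ) → ℂ :=
  fun j => μ ^ (2 * r₀ * (j.2.2 - s₀)) * f (j.1, j.2.1 - r₀, j.2.2 - s₀)

lemma Wfun_norm_apply (hμ : ‖μ‖ = 1) (f : H) (j : ℕ × ℤ × ℤ) :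
    ‖Wfun μ r₀ s₀ f j‖ = ‖f ((σ r₀ s₀).symm j)‖ := by
  have h1 : ‖μ ^ (2 * r₀ * (j.2.2 - s₀))‖ = 1 := by rw [norm_zpow, hμ, one_zpow]
  simp only [Wfun, σ, norm_mul, h1, one_mul, Equiv.coe_fn_symm_mk]

lemma Wfun_hasSum (hμ : ‖μ‖ = 1) (f : H) :
    HasSum (fun j => ‖Wfun μ r₀ s₀ f j‖ ^ (2 : ℝ≥0∞).toReal) (‖f‖ ^ (2 : ℝ≥0∞).toReal) := by
  have h := lp.hasSum_norm two_toReal_pos f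
  have h2 := ((σ r₀ s₀).symm.hasSum_iff).mpr h
  convert h2 using 2 with j
  rw [Wfun_norm_apply μ r₀ s₀ hμ]
  rfl

lemma Wfun_memℓp (hμ : ‖μ‖ = 1) (f : H) : Memℓp (Wfun μ r₀ s₀ f) 2 :=
  memℓp_gen (Wfun_hasSum μ r₀ s₀ hμ f).summable

lemma Wfun_norm_mk (hμ : ‖μ‖ = 1) (f : H) :
    ‖(⟨Wfun μ r₀ s₀ f, Wfun_memℓp μ r₀ s₀ hμ f⟩ : H)‖ = ‖f‖ := by
  have h1 := lp.hasSum_norm (E := fun _ : ℕ × ℤ × ℤ => ℂ) two_toReal_pos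
    (⟨Wfun μ r₀ s₀ f, Wfun_memℓp μ r₀ s₀ hμ f⟩ : H)
  have h3 : ‖(⟨Wfun μ r₀ s₀ f, Wfun_memℓp μ r₀ s₀ hμ f⟩ : H)‖ ^ (2 : ℝ≥0∞).toReal
      = ‖f‖ ^ (2 : ℝ≥0∞).toReal := h1.unique (Wfun_hasSum μ r₀ s₀ hμ f)
  rw [two_toReal, Real.rpow_two, Real.rpow_two] at h3
  nlinarith [norm_nonneg (⟨Wfun μ r₀ s₀ f, Wfun_memℓp μ r₀ s₀ hμ f⟩ : H), norm_nonneg f]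

def Wiso (hμ : ‖μ‖ = 1) : H →ₗᵢ[ℂ] H where
  toFun f := ⟨Wfun μ r₀ s₀ f, Wfun_memℓp μ r₀ s₀ hμ f⟩
  map_add' f g := by
    ext j
    simp only [lp.coeFn_add, Pi.add_apply]
    show Wfun μ r₀ s₀ (f + g) j = Wfun μ r₀ s₀ f j + Wfun μ r₀ s₀ g j
    simp [Wfun, mul_add]
  map_smul' c f := by
    ext j
    simp only [lp.coeFn_smul, Pi.smul_apply, RingHom.id_apply]
    show Wfun μ r₀ s₀ (c • f) j = c • Wfun μ r₀ s₀ f j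
    simp [Wfun]
    ring
  norm_map' f := Wfun_norm_mk μ r₀ s₀ hμ f

def W (hμ : ‖μ‖ = 1) : H →L[ℂ] H := (Wiso μ r₀ s₀ hμ).toContinuousLinearMap

lemma W_apply_e (hμ : ‖μ‖ = 1) (n : ℕ) (r s : ℤ) :
    W μ r₀ s₀ hμ (e (n, r, s)) = (μ ^ (2 * r₀ * s)) • e (n, r + r₀, s + s₀) := by
  ext j
  rcases j with ⟨m, u, v⟩
  show Wfun μ r₀ s₀ (e (n, r, s)) (m, u, v) = _
  rw [lp.coeFn_smul, Pi.smul_apply]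
  by_cases h : (m, u, v) = ((n : ℕ), r + r₀, s + s₀)
  · have h' : ((m : ℕ), u - r₀, v - s₀) = ((n : ℕ), r, s) := by
      simp only [Prod.mk.injEq] at h ⊢
      exact ⟨h.1, by omega, by omega⟩
    simp only [Wfun, e]
    rw [show ((m:ℕ), u - r₀, v - s₀) = ((n : ℕ), r, s) from h', h]
    rw [lp.single_apply_self, lp.single_apply_self]
    have hv : v = s + s₀ := by simp only [Prod.mk.injEq] at h; exact h.2.2
    rw [hv]
    rw [mul_one, smul_eq_mul, mul_one]
    congr 1
    ring_nf
  · have h' : ((m : ℕ), u - r₀, v - s₀) ≠ ((n : ℕ), r, s) := by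
      intro h1
      simp only [Prod.mk.injEq] at h h1
      exact h ⟨h1.1, by omega, by omega⟩
    simp only [Wfun, e]
    rw [lp.single_apply_ne _ _ _ h', lp.single_apply_ne _ _ _ h]
    simp

end UqAux

namespace UqAux

variable (μ : ℂ) (r₀ s₀ : ℤ)

lemma ext_basis {S T : H →L[ℂ] H} (h : ∀ i, S (e i) = T (e i)) : S = T := by
  refine ContinuousLinearMap.ext fun f => ?_
  have hf := lp.hasSum_single (E := fun _ : ℕ × ℤ × ℤ => ℂ)
    (p := 2) (by norm_num) f
  have key : ∀ (U : H →L[ℂ] H) (i : ℕ × ℤ × ℤ),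
      U (lp.single 2 i (f i)) = f i • U (e i) := by
    intro U i
    have : lp.single 2 i (f i) = f i • e i := by
      rw [e, ← lp.single_smul, smul_eq_mul, mul_one]
    rw [this, map_smul]
  have hS : HasSum (fun i => f i • S (e i)) (S f) := by
    have := hf.mapL S
    simpa only [key] using this
  have hT : HasSum (fun i => f i • T (e i)) (T f) := by
    have := hf.mapL T
    simpa only [key] using this
  have h' : (fun i => f i • S (e i)) = fun i => f i • T (e i) := by
    funext i; rw [h i]
  rw [h'] at hS
  exact hS.unique hT

lemma W_comp_W (hμ : ‖μ‖ = 1) (a b : ℤ) :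
    (W μ a b hμ) ∘L (W μ (-a) (-b) hμ) = (μ ^ (-(2 * a * b))) • 1 := by
  have hμ0 : μ ≠ 0 := by intro h; rw [h] at hμ; simp at hμ
  apply ext_basis
  rintro ⟨n, r, s⟩
  rw [ContinuousLinearMap.comp_apply, W_apply_e, map_smul, W_apply_e]
  rw [ContinuousLinearMap.smul_apply, ContinuousLinearMap.one_apply]
  rw [smul_smul, ← zpow_add₀ hμ0]
  have h1 : 2 * -a * s + 2 * a * (s + -b) = -(2 * a * b) := by ring
  have h2 : r + -a + a = r := by omega
  have h3 : s + -b + b = s := by omega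
  rw [h1, h2, h3]

lemma W_adjoint (hμ : ‖μ‖ = 1) (a b : ℤ) :
    ContinuousLinearMap.adjoint (W μ a b hμ) = (μ ^ (2 * a * b)) • W μ (-a) (-b) hμ := by
  have hμ0 : μ ≠ 0 := by intro h; rw [h] at hμ; simp at hμ
  symm
  rw [ContinuousLinearMap.eq_adjoint_iff]
  intro x y
  have hinv : ∀ z : H, W μ a b hμ ((μ ^ (2 * a * b)) • W μ (-a) (-b) hμ z) = z := by
    intro z
    rw [map_smul]
    have := congrArg (fun T => T z) (W_comp_W μ hμ a b)
    simp only [ContinuousLinearMap.comp_apply, ContinuousLinearMap.smul_apply,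
      ContinuousLinearMap.one_apply] at this
    rw [this, smul_smul, ← zpow_add₀ hμ0]
    have h0 : 2 * a * b + -(2 * a * b) = 0 := by ring
    rw [h0, zpow_zero, one_smul]
  calc inner (𝕜 := ℂ) ((μ ^ (2 * a * b)) • W μ (-a) (-b) hμ x) y
      = inner (𝕜 := ℂ) (W μ a b hμ ((μ ^ (2 * a * b)) • W μ (-a) (-b) hμ x))
          (W μ a b hμ y) := ((Wiso μ a b hμ).inner_map_map _ _).symm
    _ = inner (𝕜 := ℂ) x (W μ a b hμ y) := by rw [hinv]

end UqAux

namespace UqAux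

variable (μ : ℂ)

def Scent (hμ : ‖μ‖ = 1) : StarSubalgebra ℂ (H →L[ℂ] H) where
  carrier := {x | ∀ a b : ℤ, Commute x (W μ a b hμ)}
  mul_mem' hx hy a b := (hx a b).mul_left (hy a b)
  add_mem' hx hy a b := (hx a b).add_left (hy a b)
  algebraMap_mem' r a b := Algebra.commutes r _
  star_mem' := by
    intro x hx a b
    have hμ0 : μ ≠ 0 := by intro h; rw [h] at hμ; simp at hμ
    have h1 : Commute (star x) (star (W μ (-a) (-b) hμ)) := (hx (-a) (-b)).star_star
    simp only [ContinuousLinearMap.star_eq_adjoint] at h1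
    rw [W_adjoint, neg_neg, neg_neg] at h1
    rw [← ContinuousLinearMap.star_eq_adjoint] at h1
    have h2 : Commute (star x) ((μ ^ (2 * -a * -b)) • W μ a b hμ) := h1
    have h3 := h2.smul_right ((μ ^ (2 * -a * -b))⁻¹)
    rwa [smul_smul, inv_mul_cancel₀ (zpow_ne_zero _ hμ0), one_smul] at h3

lemma isClosed_Scent (hμ : ‖μ‖ = 1) : IsClosed ((Scent μ hμ : Set (H →L[ℂ] H))) := by
  have : (Scent μ hμ : Set (H →L[ℂ] H)) =
      ⋂ (a : ℤ) (b : ℤ), {x | x * W μ a b hμ = W μ a b hμ * x} := by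
    ext x
    simp only [Set.mem_iInter, Set.mem_setOf_eq]
    rfl
  rw [this]
  refine isClosed_iInter fun a => isClosed_iInter fun b => ?_
  exact isClosed_eq (continuous_id.mul continuous_const)
    (continuous_const.mul continuous_id)

end UqAux

namespace UqAux

variable (μ : ℂ)

lemma norm_e (i : ℕ × ℤ × ℤ) : ‖e i‖ = 1 := by
  have := lp.norm_single (E := fun _ : ℕ × ℤ × ℤ => ℂ) (p := 2) (by norm_num) i (1 : ℂ)
  simpa [e] using this

lemma commGen (hμ : ‖μ‖ = 1) (a b : ℤ) (X : H →L[ℂ] H) (c : ℕ → ℂ) (n' : ℕ → ℕ)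
    (dr ds : ℤ)
    (hX : ∀ (n : ℕ) (r s : ℤ),
      X (e (n, r, s)) = (c n * μ ^ (2 * ds * r)) • e (n' n, r + dr, s + ds)) :
    Commute X (W μ a b hμ) := by
  have hμ0 : μ ≠ 0 := by intro h; rw [h] at hμ; simp at hμ
  apply ext_basis
  rintro ⟨n, r, s⟩
  rw [ContinuousLinearMap.mul_apply, ContinuousLinearMap.mul_apply]
  rw [W_apply_e, map_smul, hX, hX, map_smul, W_apply_e]
  rw [smul_smul, smul_smul]
  have hsc : μ ^ (2 * a * s) * (c n * μ ^ (2 * ds * (r + a)))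
      = c n * μ ^ (2 * ds * r) * μ ^ (2 * a * (s + ds)) := by
    calc μ ^ (2 * a * s) * (c n * μ ^ (2 * ds * (r + a)))
        = c n * (μ ^ (2 * a * s) * μ ^ (2 * ds * (r + a))) := by ring
      _ = c n * μ ^ (2 * a * s + 2 * ds * (r + a)) := by rw [← zpow_add₀ hμ0]
      _ = c n * μ ^ (2 * ds * r + 2 * a * (s + ds)) := by
          congr 1; congr 1; ring
      _ = c n * (μ ^ (2 * ds * r) * μ ^ (2 * a * (s + ds))) := by rw [← zpow_add₀ hμ0]
      _ = c n * μ ^ (2 * ds * r) * μ ^ (2 * a * (s + ds)) := by ring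
  rw [hsc, show r + a + dr = r + dr + a by omega, show s + b + ds = s + ds + b by omega]

end UqAux


open UqAux

/-- the Haar state is faithful on the C*-algebra `C(U_q(2))`, realized as the
norm closure of the star-subalgebra of bounded operators on `H` generated by `A`, `B`, `D`. -/
theorem stmt2 (q : ℂ) (hq0 : 0 < ‖q‖) (hq1 : ‖q‖ < 1)
    (A B D : H →L[ℂ] H)
    (hA : ∀ (n : ℕ) (r s : ℤ), A (e (n, r, s)) =
      ((Real.sqrt (1 - ‖q‖ ^ (2 * (n + 1))) : ℝ) : ℂ) • e (n + 1, r, s))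
    (hB : ∀ (n : ℕ) (r s : ℤ), B (e (n, r, s)) = (q ^ n) • e (n, r + 1, s))
    (hD : ∀ (n : ℕ) (r s : ℤ), D (e (n, r, s)) =
      ((conj q / (‖q‖ : ℂ)) ^ (2 * r)) • e (n, r, s + 1)) :
    ∀ x ∈ (StarAlgebra.adjoin ℂ ({A, B, D} : Set (H →L[ℂ] H))).topologicalClosure,
      haar q (star x * x) = 0 → x = 0 := by
  intro x hxmem hx0
  have hq0' : q ≠ 0 := by
    intro h; rw [h] at hq0; simp at hq0
  set μ : ℂ := conj q / (‖q‖ : ℂ) with hμdef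
  have hμ : ‖μ‖ = 1 := by
    rw [hμdef, norm_div, RCLike.norm_conj]
    rw [Complex.norm_real, Real.norm_eq_abs, abs_of_nonneg (norm_nonneg q)]
    rw [div_self (ne_of_gt hq0)]
  -- x lies in the commutant of the W's
  have hmem : x ∈ Scent μ hμ := by
    refine StarSubalgebra.topologicalClosure_minimal ?_ (isClosed_Scent μ hμ) hxmem
    refine StarAlgebra.adjoin_le ?_
    intro y hy
    simp only [Set.mem_insert_iff, Set.mem_singleton_iff] at hy
    rcases hy with rfl | rfl | rfl
    · intro a b
      refine commGen μ hμ a b _ (fun n => ((Real.sqrt (1 - ‖q‖ ^ (2 * (n + 1))) : ℝ) : ℂ))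
        (fun n => n + 1) 0 0 ?_
      intro n r s
      rw [hA]
      simp
    · intro a b
      refine commGen μ hμ a b _ (fun n => q ^ n) (fun n => n) 1 0 ?_
      intro n r s
      rw [hB]
      simp
    · intro a b
      refine commGen μ hμ a b _ (fun _ => 1) (fun n => n) 0 1 ?_
      intro n r s
      have h1 : (2 : ℤ) * 1 * r = 2 * r := by ring
      rw [hD, h1, one_mul, add_zero]
  -- the diagonal terms of the Haar state
  have hterm : ∀ n : ℕ, inner (𝕜 := ℂ) (e (n, 0, 0)) ((star x * x) (e (n, 0, 0)))
      = ((‖x (e (n, 0, 0))‖ : ℂ)) ^ 2 := by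
    intro n
    rw [ContinuousLinearMap.mul_apply, ContinuousLinearMap.star_eq_adjoint,
      ContinuousLinearMap.adjoint_inner_right]
    exact_mod_cast inner_self_eq_norm_sq_to_K (𝕜 := ℂ) _
  set g : ℕ → ℝ := fun n => ‖q‖ ^ (2 * n) * ‖x (e (n, 0, 0))‖ ^ 2 with hgdef
  have hsum : Summable g := by
    have h1 : Summable (fun n : ℕ => (‖q‖ ^ 2) ^ n * ‖x‖ ^ 2) :=
      (summable_geometric_of_lt_one (by positivity) (by nlinarith)).mul_right _
    refine Summable.of_nonneg_of_le (fun n => by positivity) (fun n => ?_) h1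
    rw [hgdef]
    simp only
    rw [pow_mul]
    have h2 : ‖x (e (n, 0, 0))‖ ≤ ‖x‖ := by
      have := x.le_opNorm (e (n, 0, 0))
      rwa [norm_e, mul_one] at this
    have h3 : ‖x (e (n, 0, 0))‖ ^ 2 ≤ ‖x‖ ^ 2 :=
      pow_le_pow_left₀ (norm_nonneg _) h2 2
    exact mul_le_mul_of_nonneg_left h3 (by positivity)
  have htsum : haar q (star x * x) = (1 - (‖q‖ : ℂ) ^ 2) * ((∑' n, g n : ℝ) : ℂ) := by
    rw [haar]
    congr 1
    rw [Complex.ofReal_tsum]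
    congr 1
    funext n
    rw [hterm n, hgdef]
    push_cast
    ring
  rw [htsum] at hx0
  have hfac : (1 - (‖q‖ : ℂ) ^ 2) ≠ 0 := by
    have : ((1 - ‖q‖ ^ 2 : ℝ) : ℂ) ≠ 0 := by
      rw [Complex.ofReal_ne_zero]
      nlinarith
    simpa using this
  have hg0 : ∑' n, g n = 0 := by
    have := mul_eq_zero.mp hx0
    rcases this with h | h
    · exact absurd h hfac
    · exact_mod_cast h
  have hgz : ∀ n, g n = 0 := by
    intro n
    have h1 : g n ≤ ∑' m, g m := Summable.le_tsum hsum n (fun m _ => by positivity)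
    have h2 : 0 ≤ g n := by positivity
    linarith [hg0 ▸ h1]
  have hx00 : ∀ n : ℕ, x (e (n, 0, 0)) = 0 := by
    intro n
    have := hgz n
    rw [hgdef] at this
    simp only at this
    have habs : ‖q‖ ^ (2 * n) ≠ 0 := pow_ne_zero _ (ne_of_gt hq0)
    have : ‖x (e (n, 0, 0))‖ ^ 2 = 0 := by
      rcases mul_eq_zero.mp this with h | h
      · exact absurd h habs
      · exact h
    have : ‖x (e (n, 0, 0))‖ = 0 := by nlinarith [norm_nonneg (x (e (n, 0, 0)))]
    exact norm_eq_zero.mp this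
  -- conclude x = 0
  refine ext_basis fun i => ?_
  rcases i with ⟨n, r, s⟩
  have hWe : W μ r s hμ (e (n, 0, 0)) = e (n, r, s) := by
    rw [W_apply_e]
    simp
  have hcomm := hmem r s
  have : x (W μ r s hμ (e (n, 0, 0))) = W μ r s hμ (x (e (n, 0, 0))) := by
    have := congrArg (fun T => T (e (n, 0, 0))) hcomm
    simpa only [ContinuousLinearMap.mul_apply] using this
  rw [hWe] at this
  rw [this, hx00 n, map_zero]
  rfl
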